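/- arXiv:2308.00903 — 5 statements merged into one kernel-verified Lean document; each statement's English description precedes it below -/
import Mathlib

section
/- Let K be a field of characteristic 0, complete with respect to a discrete valuation v with residue field of characteristic p > 0, let π be a uniformizer, let ℓ be a positive integer with ℓ(p−1) < p·v(p) (i.e. ℓ < ε_K), and let d be a unit of the valuation ring O_K. Then for every finite field extension M/K, for the unique valuation w on M extending v (normalized so that w restricted to K^× equals v, with values in ℚ), every root z ∈ M of the polynomial (X+1)^p − 1 − π^ℓ d satisfies w(z) = ℓ/p. -/
/-!
Write `t = w z` and `S = (z + 1) ^ p - z ^ p - 1`, so that `z ^ p + S = π ^ ℓ d`. Since `p` divides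
every binomial coefficient of `S`, `w S ≥ w p + min (t, (p - 1) t)`, and the hypothesis
`ℓ (p - 1) < p w(p)` makes this strictly larger than `min (p t, ℓ) = min (w (z ^ p), w (π ^ ℓ d))`.
By the ultrametric inequality the two remaining terms must then have the same valuation: `p t = ℓ`.
-/

theorem min_zero_le_nsmul {t : ℚ} {j n : ℕ} (h : j ≤ n) : min 0 (n • t) ≤ j • t := by
  rcases le_total 0 t with ht | ht
  · exact min_le_of_left_le (nsmul_nonneg ht j)
  · exact min_le_of_right_le (nsmul_le_nsmul_left_of_nonpos ht h)

theorem min_lt_add_add_min_zero {p : ℕ} (hp : 2 ≤ p) {e ℓ t : ℚ} (he : 0 ≤ e)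
    (hℓ : ℓ * (p - 1) < p * e) : min ℓ (p • t) < e + (t + min 0 ((p - 2) • t)) := by
  have hp' : (2 : ℚ) ≤ p := by exact_mod_cast hp
  rw [nsmul_eq_mul, nsmul_eq_mul, Nat.cast_sub hp, Nat.cast_two]
  rcases le_or_gt 0 t with ht | ht
  · rw [min_eq_left (a := 0) (by nlinarith)]
    rcases le_total ℓ (p * t) with hpt | hpt
    · rw [min_eq_left hpt]; nlinarith
    · rw [min_eq_right hpt]; nlinarith
  · rw [min_eq_right (a := 0) (by nlinarith)]
    exact (min_le_right _ _).trans_lt (by linarith)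

namespace AddValuation

section CommRing

variable {R Γ₀ : Type*} [CommRing R] [LinearOrderedAddCommMonoidWithTop Γ₀] (v : AddValuation R Γ₀)

theorem map_natCast_nonneg (n : ℕ) : 0 ≤ v n := by
  induction n with
  | zero => simp
  | succ n ih => exact le_trans (le_min ih v.map_one.ge) (Nat.cast_succ (R := R) n ▸ v.map_add _ _)

theorem map_eq_of_min_lt_map_sub {x y : R} (h : min (v x) (v y) < v (x - y)) : v x = v y := by
  rcases min_choice (v x) (v y) with hmin | hmin <;> rw [hmin] at h
  · exact (v.map_eq_of_lt_sub (v.map_sub_swap x y ▸ h)).symm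
  · exact v.map_eq_of_lt_sub h

open Finset in
theorem le_map_add_one_pow_sub_pow_sub_one (w : AddValuation R (WithTop ℚ)) {p : ℕ}
    (hp : p.Prime) {z : R} {t : ℚ} (hz : w z = t) :
    w p + ((t + min 0 ((p - 2) • t) : ℚ) : WithTop ℚ) ≤ w ((z + 1) ^ p - z ^ p - 1) := by
  have hexpand : (z + 1) ^ p - z ^ p - 1 =
      p * z * ∑ k ∈ Ioo 0 p, z ^ (k - 1) * 1 ^ (p - k - 1) * ((p.choose k / p : ℕ) : R) := by
    rw [add_pow_prime_eq hp]; ring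
  have hsum : ((min 0 ((p - 2) • t) : ℚ) : WithTop ℚ) ≤
      w (∑ k ∈ Ioo 0 p, z ^ (k - 1) * 1 ^ (p - k - 1) * ((p.choose k / p : ℕ) : R)) := by
    refine w.map_le_sum fun k hk => ?_
    rw [w.map_mul, w.map_mul, one_pow, w.map_one, add_zero, w.map_pow, hz]
    refine le_add_of_le_of_nonneg ?_ (w.map_natCast_nonneg _)
    rw [← WithTop.coe_nsmul, WithTop.coe_le_coe]
    exact min_zero_le_nsmul (by grind)
  rw [hexpand, w.map_mul, w.map_mul, hz, WithTop.coe_add, add_assoc]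
  gcongr

end CommRing

theorem map_eq_div_of_add_one_pow_sub_one_eq {K : Type*} [Field K] (w : AddValuation K (WithTop ℚ))
    {p : ℕ} (hp : p.Prime) {e ℓ : ℚ} (hwp : w p = e) (hℓ : ℓ * (p - 1) < p * e) {z c : K}
    (hwc : w c = ℓ) (hz : (z + 1) ^ p - 1 = c) : w z = ((ℓ / p : ℚ) : WithTop ℚ) := by
  have hz0 : z ≠ 0 := by
    rintro rfl
    simp [← hz] at hwc
  obtain ⟨t, ht⟩ : ∃ t : ℚ, w z = t :=
    (WithTop.ne_top_iff_exists.mp (w.ne_top_iff.mpr hz0)).imp fun _ => Eq.symm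
  have he : 0 ≤ e := WithTop.coe_le_coe.mp (hwp ▸ w.map_natCast_nonneg p)
  have hsplit : c - z ^ p = (z + 1) ^ p - z ^ p - 1 := by rw [← hz]; ring
  have hlt : min (w c) (w (z ^ p)) < w (c - z ^ p) := by
    rw [hsplit, hwc, w.map_pow, ht, ← WithTop.coe_nsmul, ← WithTop.coe_min]
    refine lt_of_lt_of_le ?_ (w.le_map_add_one_pow_sub_pow_sub_one hp ht)
    rw [hwp, ← WithTop.coe_add, WithTop.coe_lt_coe]
    exact min_lt_add_add_min_zero hp.two_le he hℓ
  have hpt : ℓ = p * t := by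
    have := w.map_eq_of_min_lt_map_sub hlt
    rwa [hwc, w.map_pow, ht, ← WithTop.coe_nsmul, WithTop.coe_inj, nsmul_eq_mul] at this
  rw [ht, hpt, mul_div_cancel_left₀ _ (by exact_mod_cast hp.ne_zero)]

end AddValuation

theorem statement2_general
    (O K : Type*) [CommRing O]
    [Field K] [Algebra O K]
    (p : ℕ) (hp : p.Prime)
    (π : O)
    (e : ℕ) (he : Associated (p : O) (π ^ e))
    (ℓ : ℕ) (hℓ : ℓ * (p - 1) < p * e)
    (d : O) (hd : IsUnit d)
    (M : Type*) [Field M] [Algebra K M]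
    (w : AddValuation M (WithTop ℚ))
    (hw : ∀ (a : O) (n : ℕ), Associated a (π ^ n) →
      w (algebraMap K M (algebraMap O K a)) = ((n : ℚ) : WithTop ℚ))
    (z : M)
    (hz : (z + 1) ^ p - 1 - algebraMap K M (algebraMap O K (π ^ ℓ * d)) = 0) :
    w z = (((ℓ : ℚ) / (p : ℚ) : ℚ) : WithTop ℚ) := by
  have hwp : w p = (e : ℚ) := by simpa using hw _ _ he
  have hwc := hw _ _ (associated_mul_unit_left (π ^ ℓ) d hd)
  have hℓ' : (ℓ : ℚ) * (p - 1) < p * e := by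
    rw [← Nat.cast_one, ← Nat.cast_sub hp.one_le]; exact_mod_cast hℓ
  exact w.map_eq_div_of_add_one_pow_sub_one_eq hp hwp hℓ' hwc (sub_eq_zero.mp hz)

/-- `K` is a field of characteristic `0`, complete with respect to a discrete valuation `v`
(normalized so that `v : Kˣ → ℤ` is surjective), with residue field of characteristic
`p > 0`; we model this by a complete discrete valuation ring `O` with fraction field `K`,
uniformizer `π` (so `v π = 1`), and `v p = e` expressed by `p ~ π ^ e` in `O`.

Let `ℓ` be a positive integer with `ℓ (p - 1) < p · v p` (i.e. `ℓ < ε_K`) and let `d` be a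
unit of `O`.  Then for every finite field extension `M/K` and (since `K` is complete, there
is exactly one such) every `ℚ`-valued additive valuation `w` on `M` extending `v` — the
extension condition being that `w a = n` whenever `a ∈ O` is associated to `π ^ n` — every
root `z ∈ M` of the polynomial `(X+1)^p - 1 - π^ℓ d` satisfies `w z = ℓ / p`. -/
theorem statement2
    (O K : Type*) [CommRing O] [IsDomain O] [IsDiscreteValuationRing O]
    [Field K] [CharZero K] [Algebra O K] [IsFractionRing O K]
    [IsAdicComplete (IsLocalRing.maximalIdeal O) O]
    (p : ℕ) (hp : p.Prime) (hres : CharP (IsLocalRing.ResidueField O) p)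
    (π : O) (hπ : Irreducible π)
    (e : ℕ) (he : Associated (p : O) (π ^ e))
    (ℓ : ℕ) (hℓpos : 0 < ℓ) (hℓ : ℓ * (p - 1) < p * e)
    (d : O) (hd : IsUnit d)
    (M : Type*) [Field M] [Algebra K M] [FiniteDimensional K M]
    (w : AddValuation M (WithTop ℚ))
    (hw : ∀ (a : O) (n : ℕ), Associated a (π ^ n) →
      w (algebraMap K M (algebraMap O K a)) = ((n : ℚ) : WithTop ℚ))
    (z : M)
    (hz : (z + 1) ^ p - 1 - algebraMap K M (algebraMap O K (π ^ ℓ * d)) = 0) :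
    w z = (((ℓ : ℚ) / (p : ℚ) : ℚ) : WithTop ℚ) :=
  statement2_general O K p hp π e he ℓ hℓ d hd M w hw z hz
end

section
/- Let K be a field of characteristic 0, complete with respect to a discrete valuation v with residue field of characteristic p > 0, let π be a uniformizer, let ℓ be a positive integer with ℓ < ε_K := v(p)·p/(p−1) and gcd(ℓ, p) = 1, and let d be a unit of the valuation ring O_K. Fix an algebraic closure of K and an element z in it with z^p = 1 + π^ℓ d. Then the extension K(z)/K is totally ramified of degree p; that is, [K(z):K] = p and the ramification index of the unique extension of v to K(z) equals p (equivalently, the residue field extension is trivial). -/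
/-!
Put `u = z - 1`, so `(1 + u) ^ p = 1 + π ^ ℓ d`. For any `ℚ`-valued valuation `w` with
`w p ≥ e` and `w (π ^ ℓ d) = ℓ`, the middle binomial terms `C(p, k) u ^ k` have value at least
`e + w u`; since `ℓ < e p / (p - 1)` this exceeds `p · w u`, which forces `p · w u = ℓ`.
Applied in `O` to `b - 1` for a putative `p`-th root `b` of `1 + π ^ ℓ d` in `K` (necessarily in
`O`), it gives `p ∣ ℓ`, which is absurd; so `X ^ p - (1 + π ^ ℓ d)` is irreducible and
`[K(z) : K] = p`. In `K(z)` the powers `u ^ i`, `i < p`, form a basis, and the terms `c_i u ^ i`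
of an expansion have values `≡ i ℓ / p` modulo `ℤ`, pairwise distinct because `gcd (ℓ, p) = 1`.
Hence every value lies in `(1 / p) ℤ`; conversely `ℓ / p` and `1 = w π` generate `(1 / p) ℤ`.
-/

open IntermediateField Polynomial

lemma eq_of_intCast_add_mul_div_eq {ℓ p : ℕ} (hℓp : ℓ.Coprime p) {i j : ℕ} (hi : i < p)
    (hj : j < p) {M N : ℤ} (h : (M : ℚ) + i * (ℓ / p) = N + j * (ℓ / p)) : i = j := by
  have hp : (p : ℚ) ≠ 0 := by exact_mod_cast (Nat.zero_lt_of_lt hi).ne'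
  have hdvd : (p : ℤ) ∣ ((i : ℤ) - j) * ℓ := by
    refine ⟨N - M, ?_⟩
    field_simp at h
    exact_mod_cast (by linarith : ((i : ℚ) - j) * ℓ = p * (N - M))
  have := Int.eq_zero_of_abs_lt_dvd
    ((Nat.isCoprime_iff_coprime.mpr hℓp).symm.dvd_of_dvd_mul_right hdvd) (by rw [abs_lt]; omega)
  omega

lemma AddSubgroup.intCast_div_mem_of_coprime (H : AddSubgroup ℚ) {ℓ p : ℕ} (hℓp : ℓ.Coprime p)
    (hℓ : (ℓ / p : ℚ) ∈ H) (h1 : (1 : ℚ) ∈ H) (n : ℤ) : (n / p : ℚ) ∈ H := by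
  obtain ⟨x, y, hxy⟩ := Nat.isCoprime_iff_coprime.mpr hℓp
  have hxy' : (x : ℚ) * ℓ + y * p = 1 := by exact_mod_cast hxy
  rcases eq_or_ne (p : ℚ) 0 with hp | hp
  · simp [hp, H.zero_mem]
  convert add_mem (H.zsmul_mem hℓ (n * x)) (H.zsmul_mem h1 (n * y)) using 1
  simp only [zsmul_eq_mul, Int.cast_mul, mul_one]
  field_simp
  linear_combination -(n : ℚ) * hxy'

namespace AddValuation

section CommRing

variable {R : Type*} [CommRing R]

lemma map_natCast_nonneg_s3 {Γ₀ : Type*} [LinearOrderedAddCommMonoidWithTop Γ₀]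
    (v : AddValuation R Γ₀) (n : ℕ) : 0 ≤ v (n : R) := by
  induction n with
  | zero => simp
  | succ n ih => exact le_trans (le_min ih v.map_one.ge) (by simpa using v.map_add (n : R) 1)

theorem exists_map_sum_eq_of_injOn {Γ₀ : Type*} [LinearOrderedAddCommMonoidWithTop Γ₀]
    (v : AddValuation R Γ₀) {ι : Type*} [DecidableEq ι] {s : Finset ι} {f : ι → R}
    (hf : ∀ i ∈ s, ∀ j ∈ s, v (f i) = v (f j) → v (f i) ≠ ⊤ → i = j) :
    v (∑ i ∈ s, f i) = ⊤ ∨ ∃ i ∈ s, v (∑ i ∈ s, f i) = v (f i) := by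
  induction s using Finset.induction_on with
  | empty => simp
  | insert a s ha ih =>
    have ih := ih fun i hi j hj ↦ hf i (Finset.mem_insert_of_mem hi) j (Finset.mem_insert_of_mem hj)
    rw [Finset.sum_insert ha]
    rcases lt_trichotomy (v (f a)) (v (∑ i ∈ s, f i)) with hlt | heq | hgt
    · exact .inr ⟨a, Finset.mem_insert_self a s, v.map_add_eq_of_lt_left hlt⟩
    · by_cases htop : v (f a) = ⊤
      · left
        rw [eq_top_iff, ← htop]
        simpa [heq] using v.map_add (f a) (∑ i ∈ s, f i)
      · rcases ih with hs | ⟨i, hi, hvi⟩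
        · exact absurd (heq.trans hs) htop
        · obtain rfl := hf a (Finset.mem_insert_self a s) i (Finset.mem_insert_of_mem hi)
            (heq.trans hvi) htop
          exact absurd hi ha
    · rw [v.map_add_eq_of_lt_right hgt]
      rcases ih with hs | ⟨i, hi, hvi⟩
      · exact absurd (hs ▸ hgt) not_top_lt
      · exact .inr ⟨i, Finset.mem_insert_of_mem hi, hvi⟩

variable (w : AddValuation R (WithTop ℚ))

lemma map_pow_of_eq_coe {t : R} {q : ℚ} (hq : w t = q) (n : ℕ) :
    w (t ^ n) = ((n * q : ℚ) : WithTop ℚ) := by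
  rw [w.map_pow, hq, ← WithTop.coe_nsmul, nsmul_eq_mul]

lemma nonneg_of_one_add_pow_eq {p : ℕ} (hp : p ≠ 0) {t B : R} (h : (1 + t) ^ p = 1 + B)
    (hB : 0 ≤ w B) {q : ℚ} (hq : w t = q) : 0 ≤ q := by
  by_contra! hneg
  have h1t : w (1 + t) = q := by
    rw [w.map_add_eq_of_lt_right (by rw [hq, w.map_one]; exact_mod_cast hneg), hq]
  have hlow : 0 ≤ w (1 + B) := le_trans (le_min w.map_one.ge hB) (w.map_add 1 B)
  rw [← h, w.map_pow_of_eq_coe h1t] at hlow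
  have : (0 : ℚ) < p := by exact_mod_cast Nat.pos_of_ne_zero hp
  have : (0 : ℚ) ≤ p * q := by exact_mod_cast hlow
  nlinarith

lemma le_map_one_add_pow_sub {p : ℕ} (hp : p.Prime) {e : ℕ} (hwp : ((e : ℚ) : WithTop ℚ) ≤ w p)
    {t : R} {q : ℚ} (hq : w t = q) (hq0 : 0 ≤ q) :
    ((e + q : ℚ) : WithTop ℚ) ≤ w ((1 + t) ^ p - 1 - t ^ p) := by
  obtain ⟨P, rfl⟩ : ∃ P, p = P + 1 := ⟨p - 1, (Nat.sub_add_cancel hp.one_le).symm⟩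
  have hsum : (1 + t) ^ (P + 1) - 1 - t ^ (P + 1) =
      ∑ k ∈ Finset.range P, t ^ (k + 1) * ((P + 1).choose (k + 1) : R) := by
    rw [add_comm, add_pow, Finset.sum_range_succ, Finset.sum_range_succ']
    simp only [one_pow, mul_one, Nat.choose_self, Nat.cast_one, pow_zero, Nat.choose_zero_right]
    ring
  rw [hsum]
  refine w.map_le_sum fun k hk ↦ ?_
  obtain ⟨c, hc⟩ := hp.dvd_choose_self k.succ_ne_zero (by simpa using hk)
  rw [hc, Nat.cast_mul, w.map_mul, w.map_mul, w.map_pow_of_eq_coe hq, add_comm (e : ℚ),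
    WithTop.coe_add]
  gcongr
  · exact_mod_cast le_mul_of_one_le_left hq0 (by simp)
  · exact le_add_of_le_of_nonneg hwp (w.map_natCast_nonneg_s3 c)

/-- The term `t ^ p` dominates `(1 + t) ^ p - 1`: when `(p - 1) · w t < e` all other binomial
terms have larger value, and otherwise `w B ≥ e + w t` would contradict `ℓ < e p / (p - 1)`. -/
theorem map_eq_div_of_one_add_pow_eq {p : ℕ} (hp : p.Prime) {e ℓ : ℕ}
    (hwp : ((e : ℚ) : WithTop ℚ) ≤ w p) (hℓ : ℓ * (p - 1) < p * e) {t B : R}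
    (h : (1 + t) ^ p = 1 + B) (hB : w B = (ℓ : ℚ)) : w t = ((ℓ / p : ℚ) : WithTop ℚ) := by
  have htop : w t ≠ ⊤ := by
    intro htop
    obtain ⟨c, hc⟩ : t ∣ B := by simpa [h] using sub_dvd_pow_sub_pow (1 + t) 1 p
    simp [hc, htop] at hB
  obtain ⟨q, hq⟩ : ∃ q : ℚ, w t = q := (WithTop.ne_top_iff_exists.mp htop).imp fun _ ↦ Eq.symm
  have hq0 : 0 ≤ q := w.nonneg_of_one_add_pow_eq hp.ne_zero h (by simp [hB]) hq
  have hBS : B = t ^ p + ((1 + t) ^ p - 1 - t ^ p) := by rw [h]; ring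
  have hS := w.le_map_one_add_pow_sub hp hwp hq hq0
  have htp := w.map_pow_of_eq_coe hq p
  have hp1 : (1 : ℚ) < p := by exact_mod_cast hp.one_lt
  have hℓ' : (ℓ : ℚ) * (p - 1) < p * e := by
    rw [← Nat.cast_one, ← Nat.cast_sub hp.one_le]; exact_mod_cast hℓ
  rw [hq]
  by_cases hsmall : (p - 1) * q < e
  · rw [hBS, w.map_add_eq_of_lt_left (htp ▸ hS.trans_lt' (by exact_mod_cast (by linarith))),
      htp] at hB
    have : (p : ℚ) * q = ℓ := by exact_mod_cast hB
    congr 1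
    field_simp
    linarith
  · have hlow : ((e + q : ℚ) : WithTop ℚ) ≤ w B := by
      rw [hBS]
      refine le_trans (le_min ?_ hS) (w.map_add _ _)
      rw [htp]
      exact_mod_cast (by linarith)
    rw [hB] at hlow
    have : (e : ℚ) + q ≤ ℓ := by exact_mod_cast hlow
    nlinarith

end CommRing

section Field

variable {K L : Type*} [Field K] [Field L] [Algebra K L] (w : AddValuation L (WithTop ℚ))

def valueGroup : AddSubgroup ℚ where
  carrier := {q | ∃ t, t ≠ 0 ∧ w t = q}
  add_mem' := by
    rintro _ _ ⟨s, hs, hws⟩ ⟨t, ht, hwt⟩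
    exact ⟨s * t, mul_ne_zero hs ht, by rw [w.map_mul, hws, hwt, WithTop.coe_add]⟩
  zero_mem' := ⟨1, one_ne_zero, w.map_one⟩
  neg_mem' := by
    rintro _ ⟨t, ht, hq⟩
    exact ⟨t⁻¹, inv_ne_zero ht, by rw [w.map_inv, hq, WithTop.LinearOrderedAddCommGroup.coe_neg]⟩

lemma mem_valueGroup_iff {q : ℚ} : q ∈ w.valueGroup ↔ ∃ t, t ≠ 0 ∧ w t = q := Iff.rfl

theorem exists_eq_intCast_div_of_powerBasis (pb : PowerBasis K L) {ℓ : ℕ} (hℓ : ℓ.Coprime pb.dim)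
    (hK : ∀ c : K, c ≠ 0 → ∃ N : ℤ, w (algebraMap K L c) = ((N : ℚ) : WithTop ℚ))
    (hgen : w pb.gen = ((ℓ / pb.dim : ℚ) : WithTop ℚ)) {t : L} (ht : t ≠ 0) :
    ∃ n : ℤ, w t = ((n / pb.dim : ℚ) : WithTop ℚ) := by
  classical
  set c := pb.basis.repr t
  have hterm : ∀ i, c i ≠ 0 → ∃ N : ℤ,
      w (c i • pb.gen ^ (i : ℕ)) = ((N + i * (ℓ / pb.dim) : ℚ) : WithTop ℚ) := by
    intro i hi
    obtain ⟨N, hN⟩ := hK _ hi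
    exact ⟨N, by rw [Algebra.smul_def, w.map_mul, hN, w.map_pow_of_eq_coe hgen, WithTop.coe_add]⟩
  have hsum : ∑ i, c i • pb.gen ^ (i : ℕ) = t := by
    simpa only [pb.basis_eq_pow] using pb.basis.sum_repr t
  have hinj : ∀ i ∈ Finset.univ, ∀ j ∈ Finset.univ, w (c i • pb.gen ^ (i : ℕ)) =
      w (c j • pb.gen ^ (j : ℕ)) → w (c i • pb.gen ^ (i : ℕ)) ≠ ⊤ → i = j := by
    intro i _ j _ hij hne
    have hci : c i ≠ 0 := fun h ↦ hne (by simp [h])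
    have hcj : c j ≠ 0 := fun h ↦ hne (by rw [hij]; simp [h])
    obtain ⟨M, hM⟩ := hterm i hci
    obtain ⟨N, hN⟩ := hterm j hcj
    rw [hM, hN, WithTop.coe_inj] at hij
    exact Fin.ext (eq_of_intCast_add_mul_div_eq hℓ i.isLt j.isLt hij)
  obtain htop | ⟨i, -, hi⟩ := w.exists_map_sum_eq_of_injOn hinj
  · exact absurd (w.top_iff.mp (hsum ▸ htop)) ht
  rw [hsum] at hi
  have hci : c i ≠ 0 := fun h ↦ ht (w.top_iff.mp (by simpa [h] using hi))
  obtain ⟨N, hN⟩ := hterm i hci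
  have hdim : (pb.dim : ℚ) ≠ 0 := by exact_mod_cast (Nat.zero_lt_of_lt i.isLt).ne'
  refine ⟨N * pb.dim + i * ℓ, ?_⟩
  rw [hi, hN]
  congr 1
  push_cast
  field_simp

end Field

end AddValuation

namespace IsDiscreteValuationRing

variable {O : Type*} [CommRing O] [IsDomain O] [IsDiscreteValuationRing O]

variable (O) in
noncomputable def ratAddVal : AddValuation O (WithTop ℚ) :=
  (addVal O).map (Nat.castAddMonoidHom ℚ).withTopMap rfl
    (WithTop.monotone_map_iff.mpr Nat.mono_cast)

lemma ratAddVal_eq_of_associated {π a : O} (hπ : Irreducible π) {n : ℕ}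
    (h : Associated a (π ^ n)) : ratAddVal O a = ((n : ℚ) : WithTop ℚ) := by
  change (Nat.castAddMonoidHom ℚ).withTopMap (addVal O a) = _
  rw [(addVal_eq_iff_associated a _).mpr h, hπ.addVal_pow]
  rfl

variable {K : Type*} [Field K] [Algebra O K] [IsFractionRing O K]

lemma _root_.AddValuation.exists_intCast_eq_of_associated {π : O} (hπ : Irreducible π)
    (w : AddValuation K (WithTop ℚ))
    (hw : ∀ (a : O) (n : ℕ), Associated a (π ^ n) → w (algebraMap O K a) = (n : ℚ))
    {c : K} (hc : c ≠ 0) : ∃ N : ℤ, w c = ((N : ℚ) : WithTop ℚ) := by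
  obtain ⟨a, b, hb, rfl⟩ := IsFractionRing.div_surjective (A := O) c
  have ha : a ≠ 0 := by rintro rfl; simp at hc
  obtain ⟨m, hm⟩ := associated_pow_irreducible ha hπ
  obtain ⟨n, hn⟩ := associated_pow_irreducible (nonZeroDivisors.ne_zero hb) hπ
  refine ⟨m - n, ?_⟩
  rw [w.map_div, hw a m hm, hw b n hn]
  push_cast
  rfl

theorem not_pow_eq_one_add_mul {p : ℕ} (hp : p.Prime) {π : O} (hπ : Irreducible π) {e : ℕ}
    (he : Associated (p : O) (π ^ e)) {ℓ : ℕ} (hℓ : ℓ * (p - 1) < p * e) (hℓp : ℓ.Coprime p)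
    {d : O} (hd : IsUnit d) (b : K) : b ^ p ≠ algebraMap O K (1 + π ^ ℓ * d) := by
  intro hb
  obtain ⟨b, rfl⟩ : ∃ b₀ : O, algebraMap O K b₀ = b := IsIntegrallyClosed.isIntegral_iff.mp
    ⟨X ^ p - C (1 + π ^ ℓ * d), monic_X_pow_sub_C _ hp.ne_zero, by simp [hb]⟩
  have hpow : (1 + (b - 1)) ^ p = 1 + π ^ ℓ * d :=
    IsFractionRing.injective O K (by simpa using hb)
  have hval := (ratAddVal O).map_eq_div_of_one_add_pow_eq hp
    (ratAddVal_eq_of_associated hπ he).ge hℓ hpow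
    (ratAddVal_eq_of_associated hπ (associated_mul_unit_left _ _ hd))
  have hb1 : b - 1 ≠ 0 := by rintro h; simp [h] at hval
  obtain ⟨m, hm⟩ := associated_pow_irreducible hb1 hπ
  rw [ratAddVal_eq_of_associated hπ hm, WithTop.coe_inj] at hval
  have hp0 : (p : ℚ) ≠ 0 := by exact_mod_cast hp.ne_zero
  have : ℓ = m * p := by
    field_simp at hval
    exact_mod_cast hval.symm
  exact hp.one_lt.ne' (Nat.Coprime.eq_one_of_dvd hℓp.symm (Dvd.intro_left m this.symm))

end IsDiscreteValuationRing

namespace PowerBasis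

variable {K S : Type*} [Field K] [CommRing S] [Algebra K S]

noncomputable def subOne (pb : PowerBasis K S) : PowerBasis K S :=
  .ofAdjoinEqTop (pb.isIntegral_gen.sub isIntegral_one) <| adjoin_eq_top_of_gen_mem_adjoin <| by
    have h : pb.gen - 1 + 1 ∈ Algebra.adjoin K {pb.gen - 1} :=
      add_mem (Algebra.subset_adjoin (Set.mem_singleton _)) (one_mem _)
    rwa [sub_add_cancel] at h

@[simp]
lemma subOne_gen (pb : PowerBasis K S) : pb.subOne.gen = pb.gen - 1 := rfl

end PowerBasis

theorem statement3_general
    (O K : Type*) [CommRing O] [IsDomain O] [IsDiscreteValuationRing O]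
    [Field K] [Algebra O K] [IsFractionRing O K]
    (p : ℕ) (hp : p.Prime)
    (π : O) (hπ : Irreducible π)
    (e : ℕ) (he : Associated (p : O) (π ^ e))
    (ℓ : ℕ) (hℓ : ℓ * (p - 1) < p * e) (hℓp : Nat.Coprime ℓ p)
    (d : O) (hd : IsUnit d)
    (z : AlgebraicClosure K)
    (hz : z ^ p = algebraMap K (AlgebraicClosure K) (algebraMap O K (1 + π ^ ℓ * d))) :
    Module.finrank K K⟮z⟯ = p ∧
      ∀ w : AddValuation K⟮z⟯ (WithTop ℚ),
        (∀ (a : O) (n : ℕ), Associated a (π ^ n) →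
          w (algebraMap K K⟮z⟯ (algebraMap O K a)) = ((n : ℚ) : WithTop ℚ)) →
        ∀ q : ℚ, (∃ t : K⟮z⟯, t ≠ 0 ∧ w t = (q : WithTop ℚ)) ↔ ∃ n : ℤ, q = (n : ℚ) / p := by
  set f : K[X] := X ^ p - C (algebraMap O K (1 + π ^ ℓ * d))
  have hf : f.Monic := monic_X_pow_sub_C _ hp.ne_zero
  have hfz : aeval z f = 0 := by simp [f, hz]
  have hmin : minpoly K z = f := (minpoly.eq_of_irreducible_of_monic
    (X_pow_sub_C_irreducible_of_prime hp
      (IsDiscreteValuationRing.not_pow_eq_one_add_mul hp hπ he hℓ hℓp hd)) hfz hf).symm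
  have hint : IsIntegral K z := ⟨f, hf, hfz⟩
  have hfin : Module.finrank K K⟮z⟯ = p := by
    rw [adjoin.finrank hint, hmin, natDegree_X_pow_sub_C]
  refine ⟨hfin, fun w hw q ↦ ?_⟩
  let pb := (adjoin.powerBasis hint).subOne
  have hdim : pb.dim = p := pb.finrank.symm.trans hfin
  have hgen : (1 + pb.gen) ^ p = 1 + algebraMap K K⟮z⟯ (algebraMap O K (π ^ ℓ * d)) := by
    have := minpoly.aeval K (AdjoinSimple.gen K z)
    rw [minpoly_gen, hmin] at this
    simpa [pb, f, sub_eq_zero] using this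
  have hu := w.map_eq_div_of_one_add_pow_eq hp (by simpa using (hw p e he).ge) hℓ hgen
    (hw _ ℓ (associated_mul_unit_left _ _ hd))
  have hK (c : K) (hc : c ≠ 0) :=
    (w.comap (algebraMap K K⟮z⟯)).exists_intCast_eq_of_associated hπ hw hc
  rw [← w.mem_valueGroup_iff]
  constructor
  · rintro ⟨t, ht, hwt⟩
    obtain ⟨n, hn⟩ := w.exists_eq_intCast_div_of_powerBasis pb (hdim ▸ hℓp) hK (hdim ▸ hu) ht
    exact ⟨n, by rw [← hdim]; exact WithTop.coe_inj.mp (hwt ▸ hn)⟩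
  · rintro ⟨n, rfl⟩
    have hπ1 := hw π 1 (by rw [pow_one])
    refine w.valueGroup.intCast_div_mem_of_coprime hℓp ⟨pb.gen, ?_, hu⟩
      ⟨_, ?_, by exact_mod_cast hπ1⟩ n
    · rintro h; simp [h] at hu
    · rintro h; simp [h] at hπ1

/-- `K` is a field of characteristic `0`, complete with respect to a discrete valuation `v`
(normalized so that `v : Kˣ → ℤ` is surjective), with residue field of characteristic
`p > 0`; we model this by a complete discrete valuation ring `O` with fraction field `K`,
uniformizer `π` (so `v π = 1`), and `v p = e` expressed by `p ~ π ^ e` in `O`.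

Let `ℓ` be a positive integer with `ℓ (p - 1) < p · v p` (i.e. `ℓ < ε_K`) and `gcd (ℓ, p) = 1`,
and let `d` be a unit of `O`.  Fix an algebraic closure of `K` and an element `z` in it with
`z ^ p = 1 + π ^ ℓ d`.  Then `K(z)/K` is totally ramified of degree `p`: `[K(z) : K] = p`,
and for the (unique) `ℚ`-valued additive valuation `w` on `K(z)` extending `v` — the
extension condition being that `w a = n` whenever `a ∈ O` is associated to `π ^ n` — the
value group `w (K(z)ˣ)` is exactly `(1/p) ℤ`, i.e. the ramification index equals `p`. -/
theorem statement3
    (O K : Type*) [CommRing O] [IsDomain O] [IsDiscreteValuationRing O]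
    [Field K] [CharZero K] [Algebra O K] [IsFractionRing O K]
    [IsAdicComplete (IsLocalRing.maximalIdeal O) O]
    (p : ℕ) (hp : p.Prime) (hres : CharP (IsLocalRing.ResidueField O) p)
    (π : O) (hπ : Irreducible π)
    (e : ℕ) (he : Associated (p : O) (π ^ e))
    (ℓ : ℕ) (hℓpos : 0 < ℓ) (hℓ : ℓ * (p - 1) < p * e) (hℓp : Nat.Coprime ℓ p)
    (d : O) (hd : IsUnit d)
    (z : AlgebraicClosure K)
    (hz : z ^ p = algebraMap K (AlgebraicClosure K) (algebraMap O K (1 + π ^ ℓ * d))) :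
    Module.finrank K K⟮z⟯ = p ∧
      ∀ w : AddValuation K⟮z⟯ (WithTop ℚ),
        (∀ (a : O) (n : ℕ), Associated a (π ^ n) →
          w (algebraMap K K⟮z⟯ (algebraMap O K a)) = ((n : ℚ) : WithTop ℚ)) →
        ∀ q : ℚ, (∃ t : K⟮z⟯, t ≠ 0 ∧ w t = (q : WithTop ℚ)) ↔ ∃ n : ℤ, q = (n : ℚ) / p :=
  statement3_general O K p hp π hπ e he ℓ hℓ hℓp d hd z hz
end

section
/- Let K be a field of characteristic p > 0 with [K:K^p] = p^δ, let α₁, …, α_δ ∈ K be a p-basis of K, and let K₀ be a countable subfield of K. Then there exists a countable intermediate field M of the extension K/K₀ containing α₁, …, α_δ such that α₁, …, α_δ is a p-basis of M (i.e. the p^δ monomials α₁^{e₁}···α_δ^{e_δ} with 0 ≤ e_i < p form a basis of M as a vector space over M^p). -/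
/-!
Since Frobenius identifies `F` with `F^p`, a family `α` is a p-basis of `F` exactly when every
`x ∈ F` is uniquely of the form `∑ₑ yₑ ^ p * αᵉ` with `yₑ ∈ F`. Consequently `α` stays a p-basis
of any subfield `M ∋ α` of `K` that contains the coefficients `yₑ` of each of its elements. Starting
from the subfield generated by `K₀` and `α`, and adjoining ω times the (countably many)
coefficients of the elements obtained so far, yields a countable such `M`.
-/

/-- The subfield `F^p = {x^p : x ∈ F}` of a field `F` of characteristic `p`,
the image of the Frobenius endomorphism. -/
noncomputable def pthPowerSubfield (F : Type*) [Field F] (p : ℕ) [Fact p.Prime] [CharP F p] :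
    Subfield F :=
  (frobenius F p).fieldRange

/-- A family `α₁, …, α_δ` of elements of a field `F` of characteristic `p` is a *p-basis*
of `F` if the `p ^ δ` monomials `α₁^{e₁} ⋯ α_δ^{e_δ}` with `0 ≤ eᵢ < p` form a basis of `F`
as a vector space over the subfield `F^p`. -/
noncomputable def IsPBasis (p : ℕ) [Fact p.Prime] (F : Type*) [Field F] [CharP F p]
    {δ : ℕ} (α : Fin δ → F) : Prop :=
  LinearIndependent (pthPowerSubfield F p)
      (fun e : Fin δ → Fin p => ∏ i, α i ^ (e i : ℕ)) ∧
    Submodule.span (pthPowerSubfield F p)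
      (Set.range fun e : Fin δ → Fin p => ∏ i, α i ^ (e i : ℕ)) = ⊤

section PBasis

variable {p : ℕ} [Fact p.Prime] {F : Type*} [Field F] [CharP F p] {δ : ℕ}

theorem isPBasis_iff_bijective (α : Fin δ → F) :
    IsPBasis p F α ↔ Function.Bijective
      (fun y : (Fin δ → Fin p) → F => ∑ e, y e ^ p * ∏ i, α i ^ (e i : ℕ)) := by
  let φ : F ≃+* pthPowerSubfield F p := (frobenius F p).rangeRestrictFieldEquiv
  have hφ : Function.Bijective (fun y : (Fin δ → Fin p) → F => φ ∘ y) :=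
    (Equiv.arrowCongr (Equiv.refl _) φ.toEquiv).bijective
  have hcomp : (fun y : (Fin δ → Fin p) → F => ∑ e, y e ^ p * ∏ i, α i ^ (e i : ℕ)) =
      Fintype.linearCombination (pthPowerSubfield F p)
        (fun e : Fin δ → Fin p => ∏ i, α i ^ (e i : ℕ)) ∘ fun y => φ ∘ y := by
    ext y
    simp only [Function.comp_apply, Fintype.linearCombination_apply]
    exact Finset.sum_congr rfl fun e _ => by rw [Algebra.smul_def]; rfl
  rw [hcomp, Function.Bijective.of_comp_iff _ hφ, IsPBasis,
    linearIndependent_iff_injective_fintypeLinearCombination,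
    span_range_eq_top_iff_surjective_fintypeLinearCombination]
  rfl

theorem IsPBasis.subfield {α : Fin δ → F} (hα : IsPBasis p F α) (M : Subfield F)
    (hαM : ∀ i, α i ∈ M)
    (hroots : ∀ y : (Fin δ → Fin p) → F, ∑ e, y e ^ p * ∏ i, α i ^ (e i : ℕ) ∈ M → ∀ e, y e ∈ M) :
    IsPBasis p M (fun i => ⟨α i, hαM i⟩) := by
  rw [isPBasis_iff_bijective] at hα ⊢
  have hcoe : ∀ y : (Fin δ → Fin p) → M,
      ((∑ e, y e ^ p * ∏ i, ⟨α i, hαM i⟩ ^ (e i : ℕ) : M) : F) =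
        ∑ e, (y e : F) ^ p * ∏ i, α i ^ (e i : ℕ) := fun y => by push_cast; rfl
  constructor
  · intro y y' hyy'
    have h := hα.injective (by simpa only [hcoe] using congrArg Subtype.val hyy')
    exact funext fun e => Subtype.ext (congrFun h e)
  · intro x
    obtain ⟨y, hy⟩ := hα.surjective x
    have hyM := hroots y (by simp only at hy; exact hy ▸ x.2)
    exact ⟨fun e => ⟨y e, hyM e⟩, Subtype.ext ((hcoe _).trans hy)⟩

end PBasis

theorem Subfield.countable_closure {K : Type*} [Field K] {s : Set K} (hs : s.Countable) :
    (Subfield.closure s : Set K).Countable := by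
  rw [← Set.countable_coe_iff, ← Cardinal.mk_le_aleph0_iff]
  refine (Subfield.cardinalMk_closure_le_max s).trans ?_
  simp [Cardinal.mk_le_aleph0_iff.mpr hs.to_subtype]

theorem Subfield.exists_countable_forall_subset {K : Type*} [Field K] {s : Set K}
    (hs : s.Countable) (f : K → Set K) (hf : ∀ x, (f x).Countable) :
    ∃ M : Subfield K, s ⊆ M ∧ (M : Set K).Countable ∧ ∀ x ∈ M, f x ⊆ M := by
  let step (S : Subfield K) : Subfield K := Subfield.closure ((S : Set K) ∪ ⋃ x ∈ S, f x)
  let T (n : ℕ) : Subfield K := step^[n] (Subfield.closure s)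
  have hT_succ (n : ℕ) : T (n + 1) = step (T n) := Function.iterate_succ_apply' ..
  have hsucc (n : ℕ) : (T n : Set K) ∪ (⋃ x ∈ T n, f x) ⊆ T (n + 1) :=
    (hT_succ n).symm ▸ Subfield.subset_closure
  have hmono : Monotone T :=
    monotone_nat_of_le_succ fun n => Set.subset_union_left.trans (hsucc n)
  have hcount (n : ℕ) : (T n : Set K).Countable := by
    induction n with
    | zero => exact countable_closure hs
    | succ n ih => exact hT_succ n ▸ countable_closure (ih.union (ih.biUnion fun x _ => hf x))
  have hM : ((⨆ n, T n : Subfield K) : Set K) = ⋃ n, (T n : Set K) :=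
    coe_iSup_of_directed hmono.directed_le
  refine ⟨⨆ n, T n, ?_, ?_, ?_⟩
  · rw [hM]
    exact Subfield.subset_closure.trans (Set.subset_iUnion (fun n => (T n : Set K)) 0)
  · rw [hM]
    exact Set.countable_iUnion hcount
  · intro x hx
    rw [← SetLike.mem_coe, hM, Set.mem_iUnion] at hx
    obtain ⟨n, hn⟩ := hx
    calc f x ⊆ T (n + 1) :=
          (Set.subset_biUnion_of_mem hn).trans (Set.subset_union_right.trans (hsucc n))
      _ ⊆ (⨆ n, T n : Subfield K) := le_iSup T (n + 1)

theorem statement6_general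
    (p : ℕ) [Fact p.Prime] (K : Type*) [Field K] [CharP K p]
    (δ : ℕ)
    (α : Fin δ → K) (hα : IsPBasis p K α)
    (K₀ : Subfield K) (hK₀ : Countable K₀) :
    ∃ M : Subfield K, K₀ ≤ M ∧ Countable M ∧
      ∃ hM : ∀ i, α i ∈ M, IsPBasis p M (fun i => (⟨α i, hM i⟩ : M)) := by
  let Φ := Equiv.ofBijective _ ((isPBasis_iff_bijective α).mp hα)
  obtain ⟨M, hsM, hMcount, hMclosed⟩ := Subfield.exists_countable_forall_subset
    ((Set.countable_coe_iff.mp hK₀).union (Set.countable_range α))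
    (fun x => Set.range (Φ.symm x)) fun _ => Set.countable_range _
  have hαM (i : Fin δ) : α i ∈ M := hsM (Or.inr ⟨i, rfl⟩)
  refine ⟨M, fun x hx => hsM (Or.inl hx), hMcount.to_subtype, hαM, hα.subfield M hαM ?_⟩
  intro y hy e
  exact hMclosed (Φ y) hy ⟨e, by rw [Φ.symm_apply_apply]⟩

/-- Let `K` be a field of characteristic `p > 0` with `[K : K^p] = p ^ δ`, let `α₁, …, α_δ ∈ K`
be a `p`-basis of `K`, and let `K₀` be a countable subfield of `K`.  Then there is a
countable intermediate field `M` of `K/K₀` containing `α₁, …, α_δ` such that `α₁, …, α_δ`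
is a `p`-basis of `M`. -/
theorem statement6
    (p : ℕ) [Fact p.Prime] (K : Type*) [Field K] [CharP K p]
    (δ : ℕ) (hdim : Module.finrank (pthPowerSubfield K p) K = p ^ δ)
    (α : Fin δ → K) (hα : IsPBasis p K α)
    (K₀ : Subfield K) (hK₀ : Countable K₀) :
    ∃ M : Subfield K, K₀ ≤ M ∧ Countable M ∧
      ∃ hM : ∀ i, α i ∈ M, IsPBasis p M (fun i => (⟨α i, hM i⟩ : M)) :=
  statement6_general p K δ α hα K₀ hK₀
end

section
/- Let p be a prime, let K be an infinite field of characteristic p, let L/K be a finite Galois extension with Galois group H = Gal(L/K), and let d₀ ∈ L. Then there exists λ₀ ∈ L such that for every nonzero function m : H → 𝔽_p one has Σ_{σ ∈ H} m(σ)·(σ(d₀) + σ(λ₀)^p) ≠ 0 in L (where 𝔽_p is viewed as the prime subfield of L). -/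
/-!
Since `(a + b) ^ p = a ^ p + b ^ p` and natural numbers are fixed by Frobenius, the sum attached
to `m` equals `c_m + (T_m λ₀) ^ p`, where `c_m` does not depend on `λ₀` and
`T_m = ∑ σ, m(σ) • σ` is `K`-linear. By Dedekind's independence of characters `T_m ≠ 0`, and as
Frobenius is injective, the bad `λ₀` for `m` lie in a single coset of the proper subspace
`ker T_m`. By B. H. Neumann's lemma a finite union of cosets covering `L` involves a subgroup of
finite index, whereas a proper subspace over an infinite field has infinite index.
-/

open Pointwise

section Subspace

variable {k E : Type*} [DivisionRing k] [Infinite k] [AddCommGroup E] [Module k E]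

theorem Subspace.exists_eq_top_of_iUnion_vadd_eq_univ {ι : Type*} [Finite ι]
    {W : ι → Subspace k E} (v : ι → E) (hcovers : ⋃ i, v i +ᵥ (W i : Set E) = Set.univ) :
    ∃ i, W i = ⊤ := by
  have := Fintype.ofFinite ι
  have hcovers' : ⋃ i ∈ Finset.univ, v i +ᵥ ((W i).toAddSubgroup : Set E) = Set.univ := by
    simpa using hcovers
  obtain ⟨i, -, hfi⟩ := AddSubgroup.exists_finiteIndex_of_leftCoset_cover hcovers'
  refine ⟨i, by_contra fun hi => ?_⟩
  have : Finite (E ⧸ W i) := AddSubgroup.finite_quotient_of_finiteIndex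
  have : Nontrivial (E ⧸ W i) := Submodule.Quotient.nontrivial_iff.mpr hi
  have : Infinite (E ⧸ W i) := Module.Free.infinite k (E ⧸ W i)
  exact not_finite (E ⧸ W i)

theorem Subspace.exists_forall_notMem_of_sub_mem {ι : Type*} [Finite ι] {W : ι → Subspace k E}
    (hW : ∀ i, W i ≠ ⊤) (S : ι → Set E) (hS : ∀ i, ∀ x ∈ S i, ∀ y ∈ S i, x - y ∈ W i) :
    ∃ x, ∀ i, x ∉ S i := by
  classical
  let v i : E := if h : (S i).Nonempty then h.some else 0
  have hcover : ¬ ⋃ i, v i +ᵥ (W i : Set E) = Set.univ := fun h =>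
    (Subspace.exists_eq_top_of_iUnion_vadd_eq_univ v h).elim hW
  obtain ⟨x, hx⟩ := (Set.ne_univ_iff_exists_notMem _).mp hcover
  refine ⟨x, fun i hxi => hx (Set.mem_iUnion.mpr ⟨i, ?_⟩)⟩
  have hne : (S i).Nonempty := ⟨x, hxi⟩
  have hv : v i ∈ S i := by simp only [v, dif_pos hne]; exact hne.some_mem
  rw [Set.mem_vadd_set_iff_neg_vadd_mem, vadd_eq_add, neg_add_eq_sub]
  exact hS i x hxi (v i) hv

end Subspace

theorem AlgEquiv.eq_zero_of_sum_smul_toLinearMap_eq_zero {K L : Type*} [CommSemiring K] [Field L]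
    [Algebra K L] [Fintype (L ≃ₐ[K] L)] {c : (L ≃ₐ[K] L) → L}
    (h : ∑ σ, c σ • σ.toLinearMap = 0) : c = 0 :=
  funext <| Fintype.linearIndependent_iff.mp
    ((linearIndependent_toLinearMap K L L).comp _ AlgEquiv.coe_toAlgHom_injective) c h

section CharP

variable {R ι : Type*} [CommRing R] {p : ℕ} [Fact p.Prime] [CharP R p]

theorem natCast_pow_char (n : ℕ) : (n : R) ^ p = n := by
  simpa only [frobenius_def] using map_natCast (frobenius R p) n

theorem sum_natCast_mul_add_pow_char (s : Finset ι) (c : ι → ℕ) (x y : ι → R) :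
    ∑ i ∈ s, (c i : R) * (x i + y i ^ p)
      = ∑ i ∈ s, (c i : R) * x i + (∑ i ∈ s, (c i : R) * y i) ^ p := by
  simp only [sum_pow_char, mul_pow, natCast_pow_char, mul_add, Finset.sum_add_distrib]

end CharP

theorem ZMod.natCast_val_eq_zero_iff {p : ℕ} [NeZero p] {R : Type*} [Ring R] [CharP R p]
    (a : ZMod p) : (a.val : R) = 0 ↔ a = 0 := by
  rw [ZMod.natCast_val, ← map_eq_zero_iff _ (ZMod.castHom_injective R)]
  rfl

theorem statement7_general
    (p : ℕ) (hp : p.Prime)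
    (K L : Type*) [Field K] [Field L] [Algebra K L] [CharP K p]
    [FiniteDimensional K L]
    (hK : Infinite K)
    (d₀ : L) :
    ∃ lam₀ : L, ∀ m : (L ≃ₐ[K] L) → ZMod p, m ≠ 0 →
      ∑ σ : L ≃ₐ[K] L, ((m σ).val : L) * (σ d₀ + (σ lam₀) ^ p) ≠ 0 := by
  have := Fact.mk hp
  have : CharP L p := charP_of_injective_algebraMap (algebraMap K L).injective p
  let T (m : (L ≃ₐ[K] L) → ZMod p) : L →ₗ[K] L := ∑ σ, ((m σ).val : L) • σ.toLinearMap
  have hT (m) (x : L) : T m x = ∑ σ, ((m σ).val : L) * σ x := by simp [T]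
  have hker (m : {m : (L ≃ₐ[K] L) → ZMod p // m ≠ 0}) : LinearMap.ker (T m) ≠ ⊤ := by
    refine fun h => m.2 (funext fun σ => ?_)
    have hc := AlgEquiv.eq_zero_of_sum_smul_toLinearMap_eq_zero (LinearMap.ker_eq_top.mp h)
    exact (ZMod.natCast_val_eq_zero_iff _).mp (congrFun hc σ)
  let S (m : {m : (L ≃ₐ[K] L) → ZMod p // m ≠ 0}) : Set L :=
    {lam | ∑ σ, ((m.1 σ).val : L) * (σ d₀ + (σ lam) ^ p) = 0}
  have hS (m) : ∀ x ∈ S m, ∀ y ∈ S m, x - y ∈ LinearMap.ker (T m) := by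
    intro x hx y hy
    simp only [S, Set.mem_ofPred_eq, sum_natCast_mul_add_pow_char, ← hT] at hx hy
    rw [LinearMap.mem_ker, map_sub, sub_eq_zero]
    exact frobenius_inj L p (by simp only [frobenius_def]; linear_combination hx - hy)
  obtain ⟨lam₀, hlam₀⟩ := Subspace.exists_forall_notMem_of_sub_mem hker S hS
  exact ⟨lam₀, fun m hm => hlam₀ ⟨m, hm⟩⟩

/-- Let `p` be a prime, `K` an infinite field of characteristic `p`, `L/K` a finite Galois
extension with Galois group `H = Gal(L/K)`, and `d₀ ∈ L`.  Then there exists `λ₀ ∈ L` such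
that for every nonzero function `m : H → 𝔽_p` one has
`∑_{σ ∈ H} m(σ) · (σ(d₀) + σ(λ₀)^p) ≠ 0` in `L`
(where `𝔽_p` is viewed inside `L` through the prime subfield). -/
theorem statement7
    (p : ℕ) (hp : p.Prime)
    (K L : Type*) [Field K] [Field L] [Algebra K L] [CharP K p]
    [FiniteDimensional K L] [IsGalois K L]
    (hK : Infinite K)
    (d₀ : L) :
    ∃ lam₀ : L, ∀ m : (L ≃ₐ[K] L) → ZMod p, m ≠ 0 →
      ∑ σ : L ≃ₐ[K] L, ((m σ).val : L) * (σ d₀ + (σ lam₀) ^ p) ≠ 0 :=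
  statement7_general p hp K L hK d₀
end

section
/- Let K be a field with fixed algebraic closure K̄, and let Y and Z be schemes of finite type over K. Assume that for every finite extension L of K inside K̄, both gcd{[M:L] : M a finite extension of L inside K̄ with Y(M) ≠ ∅} = 1 and gcd{[M:L] : M a finite extension of L inside K̄ with Z(M) ≠ ∅} = 1. Then gcd{[L:K] : L a finite extension of K inside K̄ with Y(L) ≠ ∅ and Z(L) ≠ ∅} = 1; equivalently, the fiber product Y ×_{Spec K} Z admits a zero-cycle of degree 1 over K. -/
open AlgebraicGeometry CategoryTheory

universe u

/-- `D ⊆ ℕ` has greatest common divisor `1`, expressed by the existence of a finite subset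
whose gcd is `1`. -/
def HasGcdOne (D : Set ℕ) : Prop :=
  ∃ s : Finset ℕ, ↑s ⊆ D ∧ s.gcd id = 1

/-- For a scheme `Y` over `Spec K` (via `fY`) and a commutative ring `M` equipped with a ring
homomorphism `φ : K →+* M`, this says that `Y` has an `M`-point over `K`, i.e. there is a
morphism `Spec M ⟶ Y` of schemes over `Spec K`. -/
def HasPointOver {K : Type u} [CommRing K] {Y : Scheme.{u}}
    (fY : Y ⟶ Spec (CommRingCat.of K)) (M : Type u) [CommRing M] (φ : K →+* M) : Prop :=
  ∃ g : Spec (CommRingCat.of M) ⟶ Y, g ≫ fY = Spec.map (CommRingCat.ofHom φ)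

/-!
For a prime `p`, a `Y`-point over some `L/K` with `p ∤ [L : K]` and a `Z`-point over some
`M/L` with `p ∤ [M : L]` give a field `M` carrying points of both with `p ∤ [M : K]`, by
multiplicativity of degrees in towers.
-/

theorem HasPointOver.comp {K : Type u} [CommRing K] {Y : Scheme.{u}}
    {fY : Y ⟶ Spec (CommRingCat.of K)} {L M : Type u} [CommRing L] [CommRing M]
    {φ : K →+* L} (h : HasPointOver fY L φ) (ψ : L →+* M) :
    HasPointOver fY M (ψ.comp φ) := by
  obtain ⟨g, hg⟩ := h
  refine ⟨Spec.map (CommRingCat.ofHom ψ) ≫ g, ?_⟩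
  rw [Category.assoc, hg, ← Spec.map_comp]
  rfl

theorem HasGcdOne.exists_not_dvd {D : Set ℕ} (h : HasGcdOne D) {p : ℕ} (hp : p.Prime) :
    ∃ n ∈ D, ¬ p ∣ n := by
  obtain ⟨s, hsD, hs⟩ := h
  by_contra! hc
  exact hp.not_dvd_one (hs ▸ Finset.dvd_gcd fun n hn => hc n (hsD hn))

/-- Only finitely many primes matter: those dividing one odd element `n₀` of `D`. -/
theorem hasGcdOne_of_forall_prime {D : Set ℕ}
    (h : ∀ p : ℕ, p.Prime → ∃ n ∈ D, ¬ p ∣ n) : HasGcdOne D := by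
  classical
  obtain ⟨n₀, hn₀D, hn₀⟩ := h 2 Nat.prime_two
  choose f hfD hf using h
  let witness (p : n₀.primeFactors) : ℕ := f p (Nat.prime_of_mem_primeFactors p.2)
  refine ⟨insert n₀ (n₀.primeFactors.attach.image witness), ?_, ?_⟩
  · simpa [Set.insert_subset_iff, hn₀D, witness] using Set.range_subset_iff.2 fun _ => hfD _ _
  · rw [Nat.eq_one_iff_not_exists_prime_dvd]
    rintro p hp hdvd
    have hpn₀ : p ∣ n₀ := hdvd.trans (Finset.gcd_dvd (Finset.mem_insert_self _ _))
    have hn₀ : n₀ ≠ 0 := by rintro rfl; exact hn₀ (dvd_zero 2)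
    have hpf : p ∈ n₀.primeFactors := Nat.mem_primeFactors.mpr ⟨hp, hpn₀, hn₀⟩
    refine hf p hp (hdvd.trans (Finset.gcd_dvd (Finset.mem_insert_of_mem ?_)))
    exact Finset.mem_image.mpr ⟨⟨p, hpf⟩, Finset.mem_attach _ _, rfl⟩

namespace IntermediateField

variable {K Ω : Type*} [Field K] [Field Ω] [Algebra K Ω] {L : IntermediateField K Ω}
  (M : IntermediateField L Ω)

theorem finiteDimensional_restrictScalars [FiniteDimensional K L] [FiniteDimensional L M] :
    FiniteDimensional K (M.restrictScalars K) :=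
  have : FiniteDimensional K M := Module.Finite.trans L M
  this

theorem finrank_restrictScalars :
    Module.finrank K (M.restrictScalars K) = Module.finrank K L * Module.finrank L M :=
  (Module.finrank_mul_finrank K L M : _).symm

end IntermediateField

theorem statement9_general (K : Type u) [Field K]
    (Y Z : Scheme.{u})
    (fY : Y ⟶ Spec (CommRingCat.of K)) (fZ : Z ⟶ Spec (CommRingCat.of K))
    (hY : ∀ L : IntermediateField K (AlgebraicClosure K), FiniteDimensional K L →
      HasGcdOne {n | ∃ M : IntermediateField L (AlgebraicClosure K),
        FiniteDimensional L M ∧ n = Module.finrank L M ∧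
        HasPointOver fY M ((algebraMap L M).comp (algebraMap K L))})
    (hZ : ∀ L : IntermediateField K (AlgebraicClosure K), FiniteDimensional K L →
      HasGcdOne {n | ∃ M : IntermediateField L (AlgebraicClosure K),
        FiniteDimensional L M ∧ n = Module.finrank L M ∧
        HasPointOver fZ M ((algebraMap L M).comp (algebraMap K L))}) :
    HasGcdOne {n | ∃ L : IntermediateField K (AlgebraicClosure K),
      FiniteDimensional K L ∧ n = Module.finrank K L ∧
      HasPointOver fY L (algebraMap K L) ∧ HasPointOver fZ L (algebraMap K L)} := by
  refine hasGcdOne_of_forall_prime fun p hp => ?_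
  obtain ⟨_, ⟨L, _, rfl, hLY⟩, hpL⟩ := (hY ⊥ inferInstance).exists_not_dvd hp
  have : FiniteDimensional K (L.restrictScalars K) :=
    IntermediateField.finiteDimensional_restrictScalars L
  obtain ⟨_, ⟨M, _, rfl, hMZ⟩, hpM⟩ := (hZ (L.restrictScalars K) this).exists_not_dvd hp
  refine ⟨_, ⟨M.restrictScalars K, IntermediateField.finiteDimensional_restrictScalars M, rfl,
    hLY.comp (algebraMap (L.restrictScalars K) M), hMZ⟩, ?_⟩
  rw [IntermediateField.finrank_restrictScalars M]
  refine hp.not_dvd_mul ?_ hpM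
  rwa [IntermediateField.finrank_restrictScalars L, IntermediateField.finrank_bot, one_mul]

/-- Let `K` be a field with fixed algebraic closure `K̄`, and let `Y` and `Z` be schemes of
finite type over `K` (locally of finite type and quasi-compact over `Spec K`).  Assume that
for every finite extension `L` of `K` inside `K̄`,
`gcd {[M : L] : M/L finite inside K̄ with Y(M) ≠ ∅} = 1` and likewise for `Z`.  Then
`gcd {[L : K] : L/K finite inside K̄ with Y(L) ≠ ∅ and Z(L) ≠ ∅} = 1`; equivalently, the
fiber product `Y ×_{Spec K} Z` admits a zero-cycle of degree `1` over `K`. -/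
theorem statement9 (K : Type u) [Field K]
    (Y Z : Scheme.{u})
    (fY : Y ⟶ Spec (CommRingCat.of K)) (fZ : Z ⟶ Spec (CommRingCat.of K))
    [LocallyOfFiniteType fY] [QuasiCompact fY] [LocallyOfFiniteType fZ] [QuasiCompact fZ]
    (hY : ∀ L : IntermediateField K (AlgebraicClosure K), FiniteDimensional K L →
      HasGcdOne {n | ∃ M : IntermediateField L (AlgebraicClosure K),
        FiniteDimensional L M ∧ n = Module.finrank L M ∧
        HasPointOver fY M ((algebraMap L M).comp (algebraMap K L))})
    (hZ : ∀ L : IntermediateField K (AlgebraicClosure K), FiniteDimensional K L →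
      HasGcdOne {n | ∃ M : IntermediateField L (AlgebraicClosure K),
        FiniteDimensional L M ∧ n = Module.finrank L M ∧
        HasPointOver fZ M ((algebraMap L M).comp (algebraMap K L))}) :
    HasGcdOne {n | ∃ L : IntermediateField K (AlgebraicClosure K),
      FiniteDimensional K L ∧ n = Module.finrank K L ∧
      HasPointOver fY L (algebraMap K L) ∧ HasPointOver fZ L (algebraMap K L)} :=
  statement9_general K Y Z fY fZ hY hZ
end
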